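/- arXiv:1003.1727 — 2 statements merged into one kernel-verified Lean document; each statement's English description precedes it below -/
import Mathlib

section
/- Let μ be a Borel probability measure on ℝ whose cdf G is continuous, let λ ≠ 0, and let μ_λ be the exp-G measure, so that dμ_λ/dμ (x) = λ e^{−λG(x)}/(1 − e^{−λ}). Then the Kullback–Leibler divergence of μ_λ from μ is finite and depends only on λ: ∫ log(dμ_λ/dμ) dμ_λ = log(λ/(1 − e^{−λ})) + λ/(e^λ − 1) − 1. -/
/-!
Since `G` is the continuous cdf of `μ`, its law under `μ` is uniform on `[0, 1]` (probability
integral transform). The density of `μ_λ` is a function of `G`, so `G` maps `μ_λ` to the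
measure on `[0, 1]` with density `F_λ'`, and the divergence becomes `∫₀¹ F_λ' log F_λ'`, an
elementary integral since `log F_λ'(u)` is affine in `u`.
-/

open Real Set MeasureTheory Filter ProbabilityTheory
open scoped ENNReal

namespace ProbabilityTheory

variable {μ : Measure ℝ} [IsProbabilityMeasure μ]

lemma measure_cdf_le_of_continuous (hcont : Continuous (cdf μ)) {t : ℝ} (ht0 : 0 ≤ t)
    (ht1 : t < 1) : μ {x | cdf μ x ≤ t} = ENNReal.ofReal t := by
  set S := {x | cdf μ x ≤ t}
  have hS_bdd : BddAbove S := by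
    obtain ⟨b, hb⟩ := ((tendsto_cdf_atTop μ).eventually (eventually_gt_nhds ht1)).exists
    exact ⟨b, fun x hx =>
      le_of_not_gt fun hbx => (hb.trans_le (monotone_cdf μ hbx.le)).not_ge hx⟩
  rcases S.eq_empty_or_nonempty with hS_empty | hS_ne
  · obtain rfl : t = 0 := by
      refine le_antisymm (ge_of_tendsto' (tendsto_cdf_atBot μ) fun x => ?_) ht0
      exact le_of_not_gt fun hx => (Set.eq_empty_iff_forall_notMem.1 hS_empty x) hx.le
    rw [hS_empty, measure_empty, ENNReal.ofReal_zero]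
  have hS_closed : IsClosed S := isClosed_le hcont continuous_const
  have hS_lower : IsLowerSet S := fun x y hyx hx => (monotone_cdf μ hyx).trans hx
  have hS_Iic : S = Iic (sSup S) := by
    rw [← lowerClosure_eq_Iic_csSup hS_ne hS_bdd hS_closed, hS_lower.lowerClosure]
  -- right-continuity of the cdf at `sSup S`, approached from outside `S`
  have hcdf_sSup : cdf μ (sSup S) = t := by
    refine le_antisymm (hS_closed.csSup_mem hS_ne hS_bdd) ?_
    refine ge_of_tendsto (((cdf μ).right_continuous _).tendsto.mono_left
      (nhdsWithin_mono _ Ioi_subset_Ici_self)) ?_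
    exact eventually_nhdsWithin_of_forall fun x hx =>
      (not_le.1 (notMem_of_csSup_lt (s := S) hx hS_bdd)).le
  rw [hS_Iic, ← ofReal_cdf, hcdf_sSup]

lemma map_cdf_eq_restrict_Icc (hcont : Continuous (cdf μ)) :
    μ.map (cdf μ) = volume.restrict (Icc 0 1) := by
  refine Measure.ext_of_Iic _ _ fun t => ?_
  rw [Measure.map_apply (monotone_cdf μ).measurable measurableSet_Iic,
    Measure.restrict_apply measurableSet_Iic]
  have hIcc : Iic t ∩ Icc 0 1 = Icc 0 (min t 1) := by
    ext x
    simp only [mem_inter_iff, mem_Iic, mem_Icc, le_min_iff]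
    tauto
  rcases lt_or_ge t 0 with ht0 | ht0
  · have hpre : cdf μ ⁻¹' Iic t = ∅ :=
      eq_empty_of_forall_notMem fun x hx => (ht0.trans_le (cdf_nonneg μ x)).not_ge hx
    rw [hpre, hIcc, Icc_eq_empty (by simp [ht0]), measure_empty, measure_empty]
  rcases lt_or_ge t 1 with ht1 | ht1
  · rw [hIcc, min_eq_left ht1.le, Real.volume_Icc, sub_zero]
    exact measure_cdf_le_of_continuous hcont ht0 ht1
  · have hpre : cdf μ ⁻¹' Iic t = univ :=
      eq_univ_of_forall fun x => (cdf_le_one μ x).trans ht1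
    rw [hpre, measure_univ, hIcc, min_eq_right ht1, Real.volume_Icc, sub_zero,
      ENNReal.ofReal_one]

end ProbabilityTheory

namespace MeasureTheory

variable {α β : Type*} [MeasurableSpace α] [MeasurableSpace β] {μ : Measure α}

lemma map_withDensity_comp {f : α → β} (hf : Measurable f) {ρ : β → ℝ≥0∞}
    (hρ : Measurable ρ) : (μ.withDensity (ρ ∘ f)).map f = (μ.map f).withDensity ρ := by
  ext s hs
  rw [Measure.map_apply hf hs, withDensity_apply _ (hf hs), withDensity_apply _ hs,
    setLIntegral_map hs hρ hf, Function.comp_def]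

lemma integral_withDensity_ofReal {ρ : α → ℝ} (hρ : Measurable ρ) (hρ0 : ∀ x, 0 ≤ ρ x)
    (g : α → ℝ) :
    ∫ x, g x ∂μ.withDensity (fun x => ENNReal.ofReal (ρ x)) = ∫ x, ρ x * g x ∂μ := by
  rw [integral_withDensity_eq_integral_toReal_smul hρ.ennreal_ofReal
    (ae_of_all _ fun _ => ENNReal.ofReal_lt_top)]
  simp only [ENNReal.toReal_ofReal (hρ0 _), smul_eq_mul]

lemma integrable_withDensity_ofReal_restrict_Icc {ρ g : ℝ → ℝ} (hρ : Continuous ρ)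
    (hg : Continuous g) (a b : ℝ) :
    Integrable g ((volume.restrict (Icc a b)).withDensity fun x => ENNReal.ofReal (ρ x)) :=
  (integrable_withDensity_iff_integrable_smul hρ.measurable.real_toNNReal).2
    (((continuous_real_toNNReal.comp hρ).smul hg).integrableOn_Icc)

end MeasureTheory

-- `F_λ'`, the density of the law on `[0, 1]` with cdf `F_λ`
noncomputable def truncExpPDF (l u : ℝ) : ℝ := l / (1 - exp (-l)) * exp (-(l * u))

lemma div_one_sub_exp_neg_pos {l : ℝ} (hl : l ≠ 0) : 0 < l / (1 - exp (-l)) := by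
  rcases hl.lt_or_gt with hneg | hpos
  · exact div_pos_of_neg_of_neg hneg (sub_neg.2 (one_lt_exp_iff.2 (neg_pos.2 hneg)))
  · exact div_pos hpos (sub_pos.2 (exp_lt_one_iff.2 (neg_neg_of_pos hpos)))

lemma truncExpPDF_pos {l : ℝ} (hl : l ≠ 0) (u : ℝ) : 0 < truncExpPDF l u :=
  mul_pos (div_one_sub_exp_neg_pos hl) (exp_pos _)

@[fun_prop]
lemma continuous_truncExpPDF (l : ℝ) : Continuous (truncExpPDF l) := by
  unfold truncExpPDF
  fun_prop

lemma log_truncExpPDF {l : ℝ} (hl : l ≠ 0) (u : ℝ) :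
    log (truncExpPDF l u) = log (l / (1 - exp (-l))) - l * u := by
  rw [truncExpPDF, log_mul (div_one_sub_exp_neg_pos hl).ne' (exp_ne_zero _), log_exp,
    ← sub_eq_add_neg]

lemma continuous_log_truncExpPDF {l : ℝ} (hl : l ≠ 0) :
    Continuous fun u => log (truncExpPDF l u) :=
  (continuous_truncExpPDF l).log fun u => (truncExpPDF_pos hl u).ne'

lemma integral_truncExpPDF_mul_log {l : ℝ} (hl : l ≠ 0) :
    ∫ u in (0)..1, truncExpPDF l u * log (truncExpPDF l u)
      = log (l / (1 - exp (-l))) + l / (exp l - 1) - 1 := by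
  set c := l / (1 - exp (-l)) with hc_def
  have hden : 1 - exp (-l) ≠ 0 := (div_ne_zero_iff.1 (div_one_sub_exp_neg_pos hl).ne').2
  have hc : c / l * (1 - exp (-l)) = 1 := by rw [hc_def]; field_simp
  have hc_exp : c * exp (-l) = l / (exp l - 1) := by
    have : exp l - 1 ≠ 0 := sub_ne_zero.2 fun h => hl (exp_eq_one_iff l |>.1 h)
    rw [exp_neg] at hden
    rw [hc_def, exp_neg]
    field_simp
  have hderiv : ∀ u ∈ uIcc (0 : ℝ) 1, HasDerivAt
      (fun u => exp (-(l * u)) * (c * u + c / l * (1 - log c)))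
      (truncExpPDF l u * log (truncExpPDF l u)) u := by
    intro u _
    have hexp : HasDerivAt (fun u => exp (-(l * u))) (exp (-(l * u)) * -l) u := by
      simpa using ((hasDerivAt_id u).const_mul l).neg.exp
    have hlin : HasDerivAt (fun u => c * u + c / l * (1 - log c)) c u := by
      simpa using ((hasDerivAt_id u).const_mul c).add_const (c / l * (1 - log c))
    refine (hexp.mul hlin).congr_deriv ?_
    rw [log_truncExpPDF hl, truncExpPDF, ← hc_def]
    field_simp
    ring
  have hcont : Continuous fun u => truncExpPDF l u * log (truncExpPDF l u) :=
    (continuous_truncExpPDF l).mul (continuous_log_truncExpPDF hl)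
  rw [intervalIntegral.integral_eq_sub_of_hasDerivAt hderiv (hcont.intervalIntegrable 0 1)]
  simp only [mul_one, mul_zero, neg_zero, exp_zero, one_mul, zero_add]
  linear_combination hc_exp - (1 - log c) * hc

/-- Let `μ` be a Borel probability measure on `ℝ` with continuous cdf `G`,
`λ ≠ 0`, and let `μ_λ` be the exp-G measure, with `dμ_λ/dμ (x) = λ e^{−λG(x)}/(1 − e^{−λ})`.
Then the KL divergence of `μ_λ` from `μ` is finite and
`∫ log(dμ_λ/dμ) dμ_λ = log(λ/(1 − e^{−λ})) + λ/(e^λ − 1) − 1`. -/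
theorem expG_KL_divergence
    (μ : Measure ℝ) [IsProbabilityMeasure μ]
    (G : ℝ → ℝ) (hG : ∀ x, G x = (μ (Iic x)).toReal) (hGcont : Continuous G)
    (l : ℝ) (hl : l ≠ 0)
    (μl : Measure ℝ)
    (hμl : μl = μ.withDensity
      (fun x => ENNReal.ofReal (l / (1 - Real.exp (-l)) * Real.exp (-(l * G x))))) :
    Integrable (fun x => Real.log (l / (1 - Real.exp (-l)) * Real.exp (-(l * G x)))) μl ∧
    ∫ x, Real.log (l / (1 - Real.exp (-l)) * Real.exp (-(l * G x))) ∂μl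
      = Real.log (l / (1 - Real.exp (-l))) + l / (Real.exp l - 1) - 1 := by
  obtain rfl : G = cdf μ := funext fun x => by rw [hG x, cdf_eq_real, measureReal_def]
  have hG_meas : Measurable (cdf μ) := (monotone_cdf μ).measurable
  have hlaw : μl.map (cdf μ)
      = (volume.restrict (Icc 0 1)).withDensity fun u => ENNReal.ofReal (truncExpPDF l u) := by
    rw [hμl, ← map_cdf_eq_restrict_Icc hGcont, ← map_withDensity_comp hG_meas (by fun_prop)]
    rfl
  have hlog := continuous_log_truncExpPDF hl
  refine ⟨(integrable_map_measure hlog.aestronglyMeasurable hG_meas.aemeasurable).1 ?_, ?_⟩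
  · rw [hlaw]
    exact integrable_withDensity_ofReal_restrict_Icc (continuous_truncExpPDF l) hlog 0 1
  calc ∫ x, log (truncExpPDF l (cdf μ x)) ∂μl
      = ∫ u, log (truncExpPDF l u) ∂μl.map (cdf μ) :=
        (integral_map hG_meas.aemeasurable hlog.aestronglyMeasurable).symm
    _ = ∫ u in (0)..1, truncExpPDF l u * log (truncExpPDF l u) := by
        rw [hlaw, integral_withDensity_ofReal (continuous_truncExpPDF l).measurable
          (fun u => (truncExpPDF_pos hl u).le), integral_Icc_eq_integral_Ioc,
          ← intervalIntegral.integral_of_le zero_le_one]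
    _ = _ := integral_truncExpPDF_mul_log hl
end

section
/- Let μ be a Borel probability measure on ℝ with cdf G, let λ ≠ 0, let μ_λ be the exp-G measure, and let r > 0. If ∫ |x|^r dμ(x) < ∞, then ∫ |x|^r dμ_λ(x) < ∞; moreover, for λ > 0, (λ/(e^λ − 1)) ∫ |x|^r dμ ≤ ∫ |x|^r dμ_λ ≤ (λ/(1 − e^{−λ})) ∫ |x|^r dμ, and for λ < 0 both inequalities are reversed. -/
/-!
On `[0, 1]` the derivative `λ e^{-λu} / (1 - e^{-λ})` of `F_λ` lies between its endpoint values
`λ / (e^λ - 1)` and `λ / (1 - e^{-λ})`, so every increment of the cdf of `μ_λ` is squeezed between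
these constants times the corresponding increment of `G`. Comparing the Stieltjes measures of the
cdfs, this squeezes `μ_λ` itself between the same multiples of `μ`, and integrating any nonnegative
function (here `|x|^r`) against the three measures gives the moment bounds.
-/

open Real Set MeasureTheory ProbabilityTheory
open scoped NNReal

noncomputable def truncExpCDF (l u : ℝ) : ℝ := (1 - exp (-(l * u))) / (1 - exp (-l))

lemma sub_mul_exp_le_exp_sub_exp (a b : ℝ) : (b - a) * exp a ≤ exp b - exp a :=
  calc (b - a) * exp a = exp a * (b - a + 1) - exp a := by ring
    _ ≤ exp a * exp (b - a) - exp a := by gcongr; exact add_one_le_exp _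
    _ = exp b - exp a := by rw [← exp_add, add_sub_cancel]

lemma exp_neg_mul_sub_exp_neg_mul_le {l u v : ℝ} (hu : 0 ≤ u) (huv : u ≤ v) :
    exp (-(l * u)) - exp (-(l * v)) ≤ l * (v - u) := by
  have hconv := sub_mul_exp_le_exp_sub_exp (-(l * u)) (-(l * v))
  have hsign : l * (v - u) * exp (-(l * u)) ≤ l * (v - u) := by
    rcases le_or_gt 0 l with hl | hl
    · exact mul_le_of_le_one_right (by nlinarith) (exp_le_one_iff.mpr (by nlinarith))
    · simpa using mul_le_mul_of_nonpos_left (one_le_exp (show 0 ≤ -(l * u) by nlinarith))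
        (show l * (v - u) ≤ 0 by nlinarith)
  linarith

lemma mul_exp_neg_le_exp_neg_mul_sub_exp_neg_mul {l u v : ℝ} (huv : u ≤ v) (hv : v ≤ 1) :
    l * (v - u) * exp (-l) ≤ exp (-(l * u)) - exp (-(l * v)) := by
  have hconv := sub_mul_exp_le_exp_sub_exp (-(l * v)) (-(l * u))
  have hsign : l * (v - u) * exp (-l) ≤ l * (v - u) * exp (-(l * v)) := by
    rcases le_or_gt 0 l with hl | hl
    · exact mul_le_mul_of_nonneg_left (exp_le_exp.mpr (by nlinarith)) (by nlinarith)
    · exact mul_le_mul_of_nonpos_left (exp_le_exp.mpr (by nlinarith)) (by nlinarith)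
  linarith

lemma div_exp_sub_one_eq (l : ℝ) : l / (exp l - 1) = l * exp (-l) / (1 - exp (-l)) := by
  rw [← mul_div_mul_right l _ (exp_pos (-l)).ne', sub_one_mul, ← exp_add, add_neg_cancel,
    exp_zero]

lemma truncExpCDF_sub (l u v : ℝ) :
    truncExpCDF l v - truncExpCDF l u = (exp (-(l * u)) - exp (-(l * v))) / (1 - exp (-l)) := by
  unfold truncExpCDF; ring

lemma truncExpCDF_sub_bounds_of_pos {l u v : ℝ} (hl : 0 < l) (hu : 0 ≤ u) (huv : u ≤ v)
    (hv : v ≤ 1) :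
    l / (exp l - 1) * (v - u) ≤ truncExpCDF l v - truncExpCDF l u ∧
    truncExpCDF l v - truncExpCDF l u ≤ l / (1 - exp (-l)) * (v - u) := by
  have hE : 0 < 1 - exp (-l) := sub_pos.mpr (exp_lt_one_iff.mpr (neg_lt_zero.mpr hl))
  rw [truncExpCDF_sub, div_exp_sub_one_eq, div_mul_eq_mul_div, div_mul_eq_mul_div,
    mul_right_comm]
  exact ⟨div_le_div_of_nonneg_right (mul_exp_neg_le_exp_neg_mul_sub_exp_neg_mul huv hv) hE.le,
    div_le_div_of_nonneg_right (exp_neg_mul_sub_exp_neg_mul_le hu huv) hE.le⟩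

lemma truncExpCDF_sub_bounds_of_neg {l u v : ℝ} (hl : l < 0) (hu : 0 ≤ u) (huv : u ≤ v)
    (hv : v ≤ 1) :
    l / (1 - exp (-l)) * (v - u) ≤ truncExpCDF l v - truncExpCDF l u ∧
    truncExpCDF l v - truncExpCDF l u ≤ l / (exp l - 1) * (v - u) := by
  have hE : 1 - exp (-l) < 0 := sub_neg.mpr (one_lt_exp_iff.mpr (neg_pos.mpr hl))
  rw [truncExpCDF_sub, div_exp_sub_one_eq, div_mul_eq_mul_div, div_mul_eq_mul_div,
    mul_right_comm]
  exact ⟨div_le_div_of_nonpos_of_le hE.le (exp_neg_mul_sub_exp_neg_mul_le hu huv),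
    div_le_div_of_nonpos_of_le hE.le (mul_exp_neg_le_exp_neg_mul_sub_exp_neg_mul huv hv)⟩

theorem StieltjesFunction.measure_le_measure_of_sub_le {R : Type*} [LinearOrder R]
    [TopologicalSpace R] [OrderTopology R] [CompactIccSpace R] [MeasurableSpace R] [BorelSpace R]
    [SecondCountableTopology R] [DenselyOrdered R] {f g : StieltjesFunction R}
    (h : ∀ a b, a ≤ b → f b - f a ≤ g b - g a) : f.measure ≤ g.measure := by
  let d : StieltjesFunction R :=
    { toFun := fun x => g x - f x
      mono' := fun a b hab => by linarith [h a b hab]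
      right_continuous' := fun x => (g.right_continuous x).sub (f.right_continuous x) }
  have hg : g = f + d := by ext x; simp [d]
  rw [hg, StieltjesFunction.measure_add]
  exact Measure.le_add_right le_rfl

namespace ProbabilityTheory

variable {μ ν : Measure ℝ} [IsProbabilityMeasure μ] [IsProbabilityMeasure ν]

lemma smul_le_of_mul_cdf_sub_le {c : ℝ≥0}
    (h : ∀ a b, a ≤ b → c * (cdf μ b - cdf μ a) ≤ cdf ν b - cdf ν a) : c • μ ≤ ν := by
  rw [← measure_cdf μ, ← measure_cdf ν, ← StieltjesFunction.measure_smul]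
  exact StieltjesFunction.measure_le_measure_of_sub_le fun a b hab =>
    (mul_sub _ _ _).symm.trans_le (h a b hab)

lemma le_smul_of_cdf_sub_le_mul {C : ℝ≥0}
    (h : ∀ a b, a ≤ b → cdf ν b - cdf ν a ≤ C * (cdf μ b - cdf μ a)) : ν ≤ C • μ := by
  rw [← measure_cdf μ, ← measure_cdf ν, ← StieltjesFunction.measure_smul]
  exact StieltjesFunction.measure_le_measure_of_sub_le fun a b hab =>
    (h a b hab).trans_eq (mul_sub _ _ _)

lemma integrable_and_integral_bounds_of_cdf_sub_bounds {c C : ℝ} (hc : 0 ≤ c) (hC : 0 ≤ C)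
    (h : ∀ a b, a ≤ b → c * (cdf μ b - cdf μ a) ≤ cdf ν b - cdf ν a ∧
      cdf ν b - cdf ν a ≤ C * (cdf μ b - cdf μ a))
    {f : ℝ → ℝ} (hf : 0 ≤ f) (hfi : Integrable f μ) :
    Integrable f ν ∧ c * ∫ x, f x ∂μ ≤ ∫ x, f x ∂ν ∧ ∫ x, f x ∂ν ≤ C * ∫ x, f x ∂μ := by
  have hlow : c.toNNReal • μ ≤ ν := smul_le_of_mul_cdf_sub_le fun a b hab => by
    rw [Real.coe_toNNReal c hc]; exact (h a b hab).1
  have hup : ν ≤ C.toNNReal • μ := le_smul_of_cdf_sub_le_mul fun a b hab => by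
    rw [Real.coe_toNNReal C hC]; exact (h a b hab).2
  have hfν : Integrable f ν := hfi.smul_measure_nnreal.mono_measure hup
  refine ⟨hfν, ?_, ?_⟩
  · calc c * ∫ x, f x ∂μ = ∫ x, f x ∂(c.toNNReal • μ) := by
          rw [integral_smul_nnreal_measure, NNReal.smul_def, Real.coe_toNNReal c hc, smul_eq_mul]
      _ ≤ ∫ x, f x ∂ν := integral_mono_measure hlow (ae_of_all _ hf) hfν
  · calc ∫ x, f x ∂ν ≤ ∫ x, f x ∂(C.toNNReal • μ) :=
          integral_mono_measure hup (ae_of_all _ hf) hfi.smul_measure_nnreal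
      _ = C * ∫ x, f x ∂μ := by
          rw [integral_smul_nnreal_measure, NNReal.smul_def, Real.coe_toNNReal C hC, smul_eq_mul]

lemma expG_integrable_and_integral_bounds_of_pos {l : ℝ}
    (hν : ∀ x, cdf ν x = truncExpCDF l (cdf μ x)) (hl : 0 < l) {f : ℝ → ℝ} (hf : 0 ≤ f)
    (hfi : Integrable f μ) :
    Integrable f ν ∧ l / (exp l - 1) * ∫ x, f x ∂μ ≤ ∫ x, f x ∂ν ∧
      ∫ x, f x ∂ν ≤ l / (1 - exp (-l)) * ∫ x, f x ∂μ := by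
  refine integrable_and_integral_bounds_of_cdf_sub_bounds
    (div_pos hl (sub_pos.mpr (one_lt_exp_iff.mpr hl))).le
    (div_pos hl (sub_pos.mpr (exp_lt_one_iff.mpr (neg_lt_zero.mpr hl)))).le
    (fun a b hab => ?_) hf hfi
  rw [hν, hν]
  exact truncExpCDF_sub_bounds_of_pos hl (cdf_nonneg μ a) (monotone_cdf μ hab) (cdf_le_one μ b)

lemma expG_integrable_and_integral_bounds_of_neg {l : ℝ}
    (hν : ∀ x, cdf ν x = truncExpCDF l (cdf μ x)) (hl : l < 0) {f : ℝ → ℝ} (hf : 0 ≤ f)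
    (hfi : Integrable f μ) :
    Integrable f ν ∧ l / (1 - exp (-l)) * ∫ x, f x ∂μ ≤ ∫ x, f x ∂ν ∧
      ∫ x, f x ∂ν ≤ l / (exp l - 1) * ∫ x, f x ∂μ := by
  refine integrable_and_integral_bounds_of_cdf_sub_bounds
    (div_pos_of_neg_of_neg hl (sub_neg.mpr (one_lt_exp_iff.mpr (neg_pos.mpr hl)))).le
    (div_pos_of_neg_of_neg hl (sub_neg.mpr (exp_lt_one_iff.mpr hl))).le
    (fun a b hab => ?_) hf hfi
  rw [hν, hν]
  exact truncExpCDF_sub_bounds_of_neg hl (cdf_nonneg μ a) (monotone_cdf μ hab) (cdf_le_one μ b)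

end ProbabilityTheory

theorem expG_moments_finite_and_bounds_general
    (μ μl : Measure ℝ) [IsProbabilityMeasure μ] [IsProbabilityMeasure μl]
    (G : ℝ → ℝ) (hG : ∀ x, G x = (μ (Iic x)).toReal)
    (l : ℝ) (hl : l ≠ 0)
    (hμl : ∀ x, (μl (Iic x)).toReal
      = (1 - Real.exp (-(l * G x))) / (1 - Real.exp (-l)))
    (r : ℝ)
    (hint : Integrable (fun x : ℝ => |x| ^ r) μ) :
    Integrable (fun x : ℝ => |x| ^ r) μl ∧
    (0 < l →
      l / (Real.exp l - 1) * ∫ x, |x| ^ r ∂μ ≤ ∫ x, |x| ^ r ∂μl ∧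
      ∫ x, |x| ^ r ∂μl ≤ l / (1 - Real.exp (-l)) * ∫ x, |x| ^ r ∂μ) ∧
    (l < 0 →
      l / (1 - Real.exp (-l)) * ∫ x, |x| ^ r ∂μ ≤ ∫ x, |x| ^ r ∂μl ∧
      ∫ x, |x| ^ r ∂μl ≤ l / (Real.exp l - 1) * ∫ x, |x| ^ r ∂μ) := by
  obtain rfl : G = cdf μ := funext fun x => (hG x).trans (cdf_eq_real μ x).symm
  have hcdf : ∀ x, cdf μl x = truncExpCDF l (cdf μ x) := fun x => (cdf_eq_real μl x).trans (hμl x)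
  have hf : 0 ≤ fun x : ℝ => |x| ^ r := fun x => rpow_nonneg (abs_nonneg x) r
  rcases hl.lt_or_gt with hneg | hpos
  · obtain ⟨hfi, hbounds⟩ := expG_integrable_and_integral_bounds_of_neg hcdf hneg hf hint
    exact ⟨hfi, fun hpos => absurd hpos hneg.not_gt, fun _ => hbounds⟩
  · obtain ⟨hfi, hbounds⟩ := expG_integrable_and_integral_bounds_of_pos hcdf hpos hf hint
    exact ⟨hfi, fun _ => hbounds, fun hneg => absurd hneg hpos.not_gt⟩

/-- Let `μ` be a Borel probability measure on `ℝ` with cdf `G`, `λ ≠ 0`,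
`μ_λ` the exp-G measure, and `r > 0`. If `∫ |x|^r dμ < ∞` then `∫ |x|^r dμ_λ < ∞`, and
for `λ > 0`: `(λ/(e^λ−1)) ∫|x|^r dμ ≤ ∫|x|^r dμ_λ ≤ (λ/(1−e^{−λ})) ∫|x|^r dμ`,
with both inequalities reversed when `λ < 0`. -/
theorem expG_moments_finite_and_bounds
    (μ μl : Measure ℝ) [IsProbabilityMeasure μ] [IsProbabilityMeasure μl]
    (G : ℝ → ℝ) (hG : ∀ x, G x = (μ (Iic x)).toReal)
    (l : ℝ) (hl : l ≠ 0)
    (hμl : ∀ x, (μl (Iic x)).toReal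
      = (1 - Real.exp (-(l * G x))) / (1 - Real.exp (-l)))
    (r : ℝ) (hr : 0 < r)
    (hint : Integrable (fun x : ℝ => |x| ^ r) μ) :
    Integrable (fun x : ℝ => |x| ^ r) μl ∧
    (0 < l →
      l / (Real.exp l - 1) * ∫ x, |x| ^ r ∂μ ≤ ∫ x, |x| ^ r ∂μl ∧
      ∫ x, |x| ^ r ∂μl ≤ l / (1 - Real.exp (-l)) * ∫ x, |x| ^ r ∂μ) ∧
    (l < 0 →
      l / (1 - Real.exp (-l)) * ∫ x, |x| ^ r ∂μ ≤ ∫ x, |x| ^ r ∂μl ∧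
      ∫ x, |x| ^ r ∂μl ≤ l / (Real.exp l - 1) * ∫ x, |x| ^ r ∂μ) :=
  expG_moments_finite_and_bounds_general μ μl G hG l hl hμl r hint
end
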